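/- Let H be a finitely generated subgroup of a hyperbolic group G, with word metrics from finite generating sets S_H ⊆ S_G. If the distortion function disto(R) = R^{-1}·Diam_{Γ_H}(Γ_H ∩ B_G(R)) grows sub-exponentially (i.e. for every c > 1, disto(R)/c^R → 0), then H is quasiconvex in G. -/
import Mathlib


open Filter

/-- Word length of `g` with respect to a generating set `S`. -/
noncomputable def wordLen {G : Type} [Group G] (S : Set G) (g : G) : ℕ :=
  sInf {n : ℕ | ∃ l : List G, (∀ x ∈ l, x ∈ S) ∧ l.length = n ∧ l.prod = g}

/-- Word distance between `g` and `h`. -/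
noncomputable def wordDist {G : Type} [Group G] (S : Set G) (g h : G) : ℝ :=
  (wordLen S (g⁻¹ * h) : ℝ)

/-- Gromov product with respect to the word metric of `S`. -/
noncomputable def wordGromovProd {G : Type} [Group G] (S : Set G) (c a b : G) : ℝ :=
  (wordDist S a c + wordDist S b c - wordDist S a b) / 2

/-- The distortion function of `H` in `G`:
`disto(R) = R⁻¹ · Diam_{Γ_H}(Γ_H ∩ B_G(R))`. -/
noncomputable def disto {G : Type} [Group G] (SG SH : Set G) (H : Subgroup G)
    (R : ℕ) : ℝ :=
  (sSup {d : ℝ | ∃ h h' : G, h ∈ H ∧ h' ∈ H ∧ wordLen SG h ≤ R ∧ wordLen SG h' ≤ R ∧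
      d = (wordLen SH (h⁻¹ * h') : ℝ)}) / (R : ℝ)

section Basic
variable {G : Type} [Group G] {S : Set G} {g h : G}

lemma wordLen_le {l : List G} (hl : ∀ x ∈ l, x ∈ S) : wordLen S l.prod ≤ l.length :=
  Nat.sInf_le ⟨l, hl, rfl, rfl⟩

lemma wordLen_le' {l : List G} (hl : ∀ x ∈ l, x ∈ S) (hp : l.prod = g) :
    wordLen S g ≤ l.length := hp ▸ wordLen_le hl

lemma wordLen_one : wordLen S (1 : G) = 0 :=
  Nat.le_zero.mp (wordLen_le' (l := []) (by simp) (by simp))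

lemma exists_word (hsym : ∀ s ∈ S, s⁻¹ ∈ S) (hg : g ∈ Subgroup.closure S) :
    ∃ l : List G, (∀ x ∈ l, x ∈ S) ∧ l.prod = g := by
  induction hg using Subgroup.closure_induction with
  | mem x hx => exact ⟨[x], by simpa using hx, by simp⟩
  | one => exact ⟨[], by simp, by simp⟩
  | mul x y hx hy ihx ihy =>
    obtain ⟨lx, hlx, px⟩ := ihx
    obtain ⟨ly, hly, py⟩ := ihy
    refine ⟨lx ++ ly, ?_, by simp [px, py]⟩
    intro t ht
    rcases List.mem_append.mp ht with h | h
    exacts [hlx t h, hly t h]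
  | inv x hx ihx =>
    obtain ⟨lx, hlx, px⟩ := ihx
    refine ⟨(lx.map (fun t => t⁻¹)).reverse, ?_, ?_⟩
    · intro t ht
      simp only [List.mem_reverse, List.mem_map] at ht
      obtain ⟨u, hu, rfl⟩ := ht
      exact hsym u (hlx u hu)
    · rw [← List.prod_inv_reverse, px]

lemma wordLen_spec (hex : ∃ l : List G, (∀ x ∈ l, x ∈ S) ∧ l.prod = g) :
    ∃ l : List G, (∀ x ∈ l, x ∈ S) ∧ l.length = wordLen S g ∧ l.prod = g := by
  obtain ⟨l, hl, hp⟩ := hex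
  have hne : {n : ℕ | ∃ l : List G, (∀ x ∈ l, x ∈ S) ∧ l.length = n ∧ l.prod = g}.Nonempty :=
    ⟨l.length, ⟨l, hl, rfl, hp⟩⟩
  exact Nat.sInf_mem hne

lemma wordLen_mul_le (hexg : ∃ l : List G, (∀ x ∈ l, x ∈ S) ∧ l.prod = g)
    (hexh : ∃ l : List G, (∀ x ∈ l, x ∈ S) ∧ l.prod = h) :
    wordLen S (g * h) ≤ wordLen S g + wordLen S h := by
  obtain ⟨lg, hlg, hg1, hg2⟩ := wordLen_spec hexg
  obtain ⟨lh, hlh, hh1, hh2⟩ := wordLen_spec hexh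
  have hmem : ∀ x ∈ lg ++ lh, x ∈ S := by
    intro t ht
    rcases List.mem_append.mp ht with h | h
    exacts [hlg t h, hlh t h]
  calc wordLen S (g * h) ≤ (lg ++ lh).length :=
        wordLen_le' hmem (by simp [hg2, hh2])
    _ = wordLen S g + wordLen S h := by simp [hg1, hh1]

lemma wordLen_inv_le (hsym : ∀ s ∈ S, s⁻¹ ∈ S)
    (hex : ∃ l : List G, (∀ x ∈ l, x ∈ S) ∧ l.prod = g) :
    wordLen S g⁻¹ ≤ wordLen S g := by
  obtain ⟨l, hl, hlen, hp⟩ := wordLen_spec hex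
  calc wordLen S g⁻¹ ≤ ((l.map (fun t => t⁻¹)).reverse).length := wordLen_le'
        (by intro t ht
            simp only [List.mem_reverse, List.mem_map] at ht
            obtain ⟨u, hu, rfl⟩ := ht
            exact hsym u (hl u hu))
        (by rw [← List.prod_inv_reverse, hp])
    _ = wordLen S g := by simp [hlen]

/-- Path from a word list: distance between intermediate points. -/
lemma wordLen_path_le (l : List G) (hl : ∀ x ∈ l, x ∈ S) (a : G) {j j' : ℕ}
    (h : j ≤ j') :
    wordLen S ((a * (l.take j).prod)⁻¹ * (a * (l.take j').prod)) ≤ j' - j := by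
  have key : (a * (l.take j).prod)⁻¹ * (a * (l.take j').prod)
      = ((l.drop j).take (j' - j)).prod := by
    have : l.take j' = l.take j ++ (l.drop j).take (j' - j) := by
      rw [← List.take_add]; congr 1; omega
    rw [this, List.prod_append]; group
  rw [key]
  refine le_trans (wordLen_le ?_) ?_
  · intro t ht; exact hl t (List.mem_of_mem_drop (List.mem_of_mem_take ht))
  · simp [List.length_take]


lemma wordGromovProd_comm {G : Type} [Group G] {S : Set G}
    (hsymm : ∀ a b : G, wordDist S a b = wordDist S b a) (c a b : G) :
    wordGromovProd S c a b = wordGromovProd S c b a := by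
  unfold wordGromovProd
  rw [hsymm a b]
  ring

/-- Bisection: Gromov product of endpoints of a path vs. products along steps. -/
lemma bisection {G : Type} [Group G] {S : Set G} {δ : ℝ} (hδ : 0 ≤ δ)
    (hhyp : ∀ x y z w : G,
      min (wordGromovProd S w x z) (wordGromovProd S w y z) - δ ≤ wordGromovProd S w x y)
    (hsymm : ∀ a b : G, wordDist S a b = wordDist S b a)
    (x : G) (c0 : ℝ) :
    ∀ (K L : ℕ) (p : ℕ → G), 1 ≤ L → L ≤ 2 ^ K →
      (∀ j < L, c0 ≤ wordGromovProd S x (p j) (p (j + 1))) →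
      c0 - δ * K ≤ wordGromovProd S x (p 0) (p L) := by
  intro K
  induction K with
  | zero =>
    intro L p h1 h2 hs
    interval_cases L
    simpa using hs 0 (by norm_num)
  | succ K ih =>
    intro L p h1 h2 hs
    by_cases hL : L ≤ 2 ^ K
    · have h' := ih L p h1 hL hs
      push_cast
      nlinarith [Nat.cast_nonneg (α := ℝ) K]
    · push_neg at hL
      set m := 2 ^ K with hm
      have hmL : m < L := hL
      have h1' : 1 ≤ m := Nat.one_le_two_pow
      have hfirst : c0 - δ * K ≤ wordGromovProd S x (p 0) (p m) :=
        ih m p h1' le_rfl (fun j hj => hs j (lt_trans hj hmL))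
      have hsecond : c0 - δ * K ≤ wordGromovProd S x (p m) (p L) := by
        have h2' : L - m ≤ 2 ^ K := by
          have : L ≤ 2 ^ (K + 1) := h2
          have : 2 ^ (K + 1) = 2 ^ K + 2 ^ K := by ring
          omega
        have := ih (L - m) (fun j => p (m + j)) (by omega) h2'
          (fun j hj => by
            have := hs (m + j) (by omega)
            simpa [Nat.add_assoc] using this)
        have hrw : m + (L - m) = L := by omega
        simpa [hrw] using this
      have hmin := hhyp (p 0) (p L) (p m) x
      have : min (wordGromovProd S x (p 0) (p m)) (wordGromovProd S x (p L) (p m)) - δ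
          ≤ wordGromovProd S x (p 0) (p L) := hmin
      rw [wordGromovProd_comm hsymm x (p L) (p m)] at this
      push_cast
      have hmin2 : c0 - δ * K ≤ min (wordGromovProd S x (p 0) (p m)) (wordGromovProd S x (p m) (p L)) :=
        le_min hfirst hsecond
      calc c0 - δ * ((K : ℝ) + 1) = (c0 - δ * K) - δ := by ring
        _ ≤ min (wordGromovProd S x (p 0) (p m)) (wordGromovProd S x (p m) (p L)) - δ := by linarith
        _ ≤ wordGromovProd S x (p 0) (p L) := this

/-- Balls in the word metric are finite. -/
lemma ball_finite {G : Type} [Group G] {S : Set G} (hSfin : S.Finite)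
    (hword : ∀ g : G, ∃ l : List G, (∀ x ∈ l, x ∈ S) ∧ l.prod = g) :
    ∀ R : ℕ, {g : G | wordLen S g ≤ R}.Finite := by
  intro R
  induction R with
  | zero =>
    refine Set.Finite.subset (Set.finite_singleton (1 : G)) ?_
    intro g hg
    simp only [Set.mem_setOf_eq, Nat.le_zero] at hg
    obtain ⟨l, hl, hlen, hp⟩ := wordLen_spec (hword g)
    rw [hg] at hlen
    rw [List.length_eq_zero_iff] at hlen
    simp [hlen] at hp
    simp [← hp]
  | succ R ih =>
    refine Set.Finite.subset ((ih.union (Set.Finite.image2 (· * ·) hSfin ih))) ?_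
    intro g hg
    simp only [Set.mem_setOf_eq] at hg
    obtain ⟨l, hl, hlen, hp⟩ := wordLen_spec (hword g)
    cases l with
    | nil =>
      left
      simp at hp
      simp [Set.mem_setOf_eq, ← hp, wordLen_one]
    | cons a t =>
      right
      refine ⟨a, hl a (by simp), t.prod, ?_, by simp [← hp]⟩
      have : wordLen S t.prod ≤ t.length := wordLen_le (fun x hx => hl x (by simp [hx]))
      simp only [Set.mem_setOf_eq]
      simp at hlen
      omega

/-- Distortion bound: the `SH`-length of an element of `H` inside the `R`-ball. -/
lemma le_disto {G : Type} [Group G] {SG SH : Set G} {H : Subgroup G}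
    (hSGfin : SG.Finite)
    (hword : ∀ g : G, ∃ l : List G, (∀ x ∈ l, x ∈ SG) ∧ l.prod = g)
    (R : ℕ) (h' : G) (h'H : h' ∈ H) (hlen : wordLen SG h' ≤ R) :
    (wordLen SH h' : ℝ) ≤ disto SG SH H R * R := by
  set s : Set ℝ := {d : ℝ | ∃ h h' : G, h ∈ H ∧ h' ∈ H ∧ wordLen SG h ≤ R ∧
      wordLen SG h' ≤ R ∧ d = (wordLen SH (h⁻¹ * h') : ℝ)} with hs
  have hbdd : BddAbove s := by
    have hsub : s ⊆ (fun p : G × G => (wordLen SH (p.1⁻¹ * p.2) : ℝ)) ''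
        ({g : G | wordLen SG g ≤ R} ×ˢ {g : G | wordLen SG g ≤ R}) := by
      rintro d ⟨h, h'', hH, h''H, hl, hl', rfl⟩
      exact ⟨(h, h''), ⟨hl, hl'⟩, rfl⟩
    exact ((((ball_finite hSGfin hword R).prod (ball_finite hSGfin hword R)).image _).subset
      hsub).bddAbove
  have hmem : (wordLen SH h' : ℝ) ∈ s := by
    refine ⟨1, h', H.one_mem, h'H, ?_, hlen, by simp⟩
    simp [wordLen_one]
  have hle : (wordLen SH h' : ℝ) ≤ sSup s := le_csSup hbdd hmem
  rcases Nat.eq_zero_or_pos R with hR | hR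
  · subst hR
    simp at hlen
    obtain ⟨l, hl, hlen2, hp⟩ := wordLen_spec (hword h')
    rw [hlen] at hlen2
    rw [List.length_eq_zero_iff] at hlen2
    simp [hlen2] at hp
    simp [← hp, wordLen_one]
  · have hRpos : (0 : ℝ) < R := by exact_mod_cast hR
    have : disto SG SH H R * R = sSup s := by
      unfold disto
      rw [← hs]
      field_simp
    rw [this]
    exact hle


set_option maxHeartbeats 1000000 in
/-- A finitely generated subgroup of a hyperbolic group whose distortion function grows
sub-exponentially is quasiconvex. -/
theorem stmt10 (G : Type) [Group G] (SG SH : Set G) (H : Subgroup G)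
    (hSGfin : SG.Finite) (hSHfin : SH.Finite) (hsub : SH ⊆ SG)
    (hSHinH : SH ⊆ (H : Set G))
    (hsymG : ∀ s ∈ SG, s⁻¹ ∈ SG) (hsymH : ∀ s ∈ SH, s⁻¹ ∈ SH)
    (hgenG : Subgroup.closure SG = ⊤) (hgenH : Subgroup.closure SH = H)
    (δ : ℝ) (hδ : 0 ≤ δ)
    (hhyp : ∀ x y z w : G,
      min (wordGromovProd SG w x z) (wordGromovProd SG w y z) - δ ≤
        wordGromovProd SG w x y)
    (hsubexp : ∀ c : ℝ, 1 < c →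
      Tendsto (fun R : ℕ => disto SG SH H R / c ^ R) atTop (nhds 0)) :
    ∃ k : ℝ, 0 ≤ k ∧ ∀ (n : ℕ) (w : ℕ → G), w 0 ∈ H → w n ∈ H →
      (∀ i < n, (w i)⁻¹ * w (i + 1) ∈ SG) → wordLen SG ((w 0)⁻¹ * w n) = n →
      ∀ i ≤ n, ∃ h ∈ H, wordDist SG (w i) h ≤ k := by
  by_contra hcon
  push_neg at hcon
  -- general word facts for SG
  have hword : ∀ g : G, ∃ l : List G, (∀ x ∈ l, x ∈ SG) ∧ l.prod = g := by
    intro g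
    exact exists_word hsymG (by rw [hgenG]; trivial)
  have hlenInv : ∀ g : G, wordLen SG g⁻¹ = wordLen SG g := by
    intro g
    refine le_antisymm (wordLen_inv_le hsymG (hword g)) ?_
    have := wordLen_inv_le hsymG (hword g⁻¹)
    simpa using this
  have hsymm : ∀ a b : G, wordDist SG a b = wordDist SG b a := by
    intro a b
    unfold wordDist
    have : b⁻¹ * a = (a⁻¹ * b)⁻¹ := by group
    rw [this, hlenInv]
  have htri : ∀ g h : G, wordLen SG (g * h) ≤ wordLen SG g + wordLen SG h :=
    fun g h => wordLen_mul_le (hword g) (hword h)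
  -- distance to H
  set DH : G → ℕ := fun g => sInf {m : ℕ | ∃ h ∈ H, wordLen SG (g⁻¹ * h) = m} with hDH
  have hDHne : ∀ g : G, {m : ℕ | ∃ h ∈ H, wordLen SG (g⁻¹ * h) = m}.Nonempty :=
    fun g => ⟨wordLen SG (g⁻¹ * 1), 1, H.one_mem, rfl⟩
  have hDH_le : ∀ (g h : G), h ∈ H → DH g ≤ wordLen SG (g⁻¹ * h) :=
    fun g h hh => Nat.sInf_le ⟨h, hh, rfl⟩
  have hDH_spec : ∀ g : G, ∃ h ∈ H, wordLen SG (g⁻¹ * h) = DH g :=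
    fun g => Nat.sInf_mem (hDHne g)
  set ε : ℝ := 1 / (2 * (δ + 1)) with hε
  have hδ1 : (0:ℝ) < δ + 1 := by linarith
  have hεpos : 0 < ε := by positivity
  have hεle : ε ≤ 1/2 := by
    rw [hε, div_le_div_iff₀ (by linarith) (by norm_num)]
    linarith
  -- the key frequent inequality
  have key : ∀ N : ℕ, ∃ D : ℕ, N < D ∧
      (2:ℝ) ^ (2*ε*(D:ℝ) - ε - 1) ≤ 2*(D:ℝ) + disto SG SH H (6*D) * (6*(D:ℝ)) := by
    intro N
    obtain ⟨n, w, hw0, hwn, hstep, hgeo, i, hi, hfar⟩ := hcon (N:ℝ) (Nat.cast_nonneg N)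
    have hflip : ∀ u v : G, wordLen SG (u⁻¹ * v) = wordLen SG (v⁻¹ * u) := by
      intro u v
      rw [show u⁻¹ * v = (v⁻¹ * u)⁻¹ by group, hlenInv]
    -- upper bound along the geodesic
    have hub : ∀ i₁ m : ℕ, i₁ + m ≤ n → wordLen SG ((w i₁)⁻¹ * w (i₁+m)) ≤ m := by
      intro i₁ m
      induction m with
      | zero => intro _; simp [wordLen_one]
      | succ m ih =>
        intro hle
        have h1 : wordLen SG ((w i₁)⁻¹ * w (i₁+m)) ≤ m := ih (by omega)
        have hstep' : wordLen SG ((w (i₁+m))⁻¹ * w (i₁+m+1)) ≤ 1 := by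
          refine wordLen_le' (l := [(w (i₁+m))⁻¹ * w (i₁+m+1)]) ?_ (by simp)
          intro t ht
          simp only [List.mem_singleton] at ht
          rw [ht]
          exact hstep _ (by omega)
        have e1 : (w i₁)⁻¹ * w (i₁+m+1)
            = ((w i₁)⁻¹ * w (i₁+m)) * ((w (i₁+m))⁻¹ * w (i₁+m+1)) := by group
        calc wordLen SG ((w i₁)⁻¹ * w (i₁+(m+1)))
            = wordLen SG (((w i₁)⁻¹ * w (i₁+m)) * ((w (i₁+m))⁻¹ * w (i₁+m+1))) := by
              rw [show i₁ + (m+1) = i₁ + m + 1 by omega, e1]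
          _ ≤ wordLen SG ((w i₁)⁻¹ * w (i₁+m)) + wordLen SG ((w (i₁+m))⁻¹ * w (i₁+m+1)) :=
              htri _ _
          _ ≤ m + 1 := by omega
    have hub' : ∀ i₁ j : ℕ, i₁ ≤ j → j ≤ n → wordLen SG ((w i₁)⁻¹ * w j) ≤ j - i₁ := by
      intro i₁ j h1 h2
      have := hub i₁ (j - i₁) (by omega)
      rwa [show i₁ + (j - i₁) = j by omega] at this
    -- the path is a geodesic between any two of its points
    have hgeq : ∀ i₁ j : ℕ, i₁ ≤ j → j ≤ n → wordLen SG ((w i₁)⁻¹ * w j) = j - i₁ := by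
      intro i₁ j h1 h2
      refine le_antisymm (hub' i₁ j h1 h2) ?_
      have e1 : ((w 0)⁻¹ * w i₁) * (((w i₁)⁻¹ * w j) * ((w j)⁻¹ * w n)) = (w 0)⁻¹ * w n := by
        group
      have t1 := htri ((w 0)⁻¹ * w i₁) (((w i₁)⁻¹ * w j) * ((w j)⁻¹ * w n))
      have t2 := htri ((w i₁)⁻¹ * w j) ((w j)⁻¹ * w n)
      rw [e1, hgeo] at t1
      have u1 : wordLen SG ((w 0)⁻¹ * w i₁) ≤ i₁ := by
        have := hub' 0 i₁ (Nat.zero_le _) (le_trans h1 h2)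
        omega
      have u2 : wordLen SG ((w j)⁻¹ * w n) ≤ n - j := hub' j n h2 le_rfl
      omega
    -- the far point
    obtain ⟨hstar, hstarH, hstareq⟩ := hDH_spec (w i)
    have hNlt : N < DH (w i) := by
      have hh := hfar hstar hstarH
      unfold wordDist at hh
      rw [hstareq] at hh
      exact_mod_cast hh
    -- the maximum of distance to H along the geodesic
    have hne : (Finset.range (n+1)).Nonempty := ⟨0, by simp⟩
    obtain ⟨i0, hi0mem, hi0⟩ := Finset.exists_mem_eq_sup (Finset.range (n+1)) hne
      (fun j => DH (w j))
    set D : ℕ := (Finset.range (n+1)).sup (fun j => DH (w j)) with hDdef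
    have hi0n : i0 ≤ n := by
      have := Finset.mem_range.mp hi0mem
      omega
    have hmax : ∀ j, j ≤ n → DH (w j) ≤ D := by
      intro j hj
      rw [hDdef]
      exact Finset.le_sup (f := fun j => DH (w j)) (Finset.mem_range.mpr (by omega))
    have hND : N < D := lt_of_lt_of_le hNlt (hmax i hi)
    have hD1 : 1 ≤ D := by omega
    set x : G := w i0 with hxdef
    have hxD : DH x = D := hi0.symm
    set s : ℕ := i0 - min i0 (2*D) with hs
    set e : ℕ := min (i0 + 2*D) n with he
    have hsle : s ≤ i0 := by omega
    have hie : i0 ≤ e := by omega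
    have hen : e ≤ n := by omega
    have hes : e - s ≤ 4*D := by omega
    set A : G := w s with hsA
    set B : G := w e with hsB
    have dax : wordLen SG (A⁻¹ * x) = i0 - s := hgeq s i0 hsle hi0n
    have dxb : wordLen SG (x⁻¹ * B) = e - i0 := hgeq i0 e hie hen
    have dab : wordLen SG (A⁻¹ * B) = e - s := hgeq s e (le_trans hsle hie) hen
    obtain ⟨ha, haH, hla⟩ := hDH_spec A
    obtain ⟨hb, hbH, hlb⟩ := hDH_spec B
    have hlaD : DH A ≤ D := hmax s (le_trans hsle hi0n)
    have hlbD : DH B ≤ D := hmax e hen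
    have hA : DH A + D ≤ i0 - s := by
      by_cases hcase : 2*D ≤ i0
      · omega
      · have hs0 : s = 0 := by omega
        have hAH : A ∈ H := by rw [hsA, hs0]; exact hw0
        have hA0 : DH A = 0 := by
          have := hDH_le A A hAH
          simpa [wordLen_one] using this
        have hDle : DH x ≤ i0 - s := by
          have h1 := hDH_le x A hAH
          rw [hflip x A, dax] at h1
          exact h1
        omega
    have hB : DH B + D ≤ e - i0 := by
      by_cases hcase : i0 + 2*D ≤ n
      · omega
      · have he0 : e = n := by omega
        have hBH : B ∈ H := by rw [hsB, he0]; exact hwn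
        have hB0 : DH B = 0 := by
          have := hDH_le B B hBH
          simpa [wordLen_one] using this
        have hDle : DH x ≤ e - i0 := by
          have h1 := hDH_le x B hBH
          rw [dxb] at h1
          exact h1
        omega
    -- connecting h_a, h_b through H
    have hd6 : wordLen SG (ha⁻¹ * hb) ≤ 6*D := by
      have e1 : ha⁻¹ * hb = (ha⁻¹ * A) * ((A⁻¹ * B) * (B⁻¹ * hb)) := by group
      have t1 := htri (ha⁻¹ * A) ((A⁻¹ * B) * (B⁻¹ * hb))
      have t2 := htri (A⁻¹ * B) (B⁻¹ * hb)
      rw [← e1] at t1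
      have u1 : wordLen SG (ha⁻¹ * A) = DH A := by rw [hflip, hla]
      omega
    have hmemH : ha⁻¹ * hb ∈ H := H.mul_mem (H.inv_mem haH) hbH
    obtain ⟨lH, hlH, hlHlen, hlHprod⟩ := wordLen_spec
      (exists_word hsymH (by rw [hgenH]; exact hmemH))
    set M : ℕ := wordLen SH (ha⁻¹ * hb) with hMdef
    have hM : (M:ℝ) ≤ disto SG SH H (6*D) * ((6*D : ℕ):ℝ) :=
      le_disto hSGfin hword (6*D) _ hmemH hd6
    obtain ⟨lA, hlA, hlAlen, hlAprod⟩ := wordLen_spec (hword (A⁻¹ * ha))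
    obtain ⟨lB, hlB, hlBlen, hlBprod⟩ := wordLen_spec (hword (hb⁻¹ * B))
    have hlAlen' : lA.length = DH A := by rw [hlAlen, hla]
    have hlBlen' : lB.length = DH B := by rw [hlBlen, hflip, hlb]
    set LB : List G := lA ++ (lH ++ lB) with hLB
    have hLBmem : ∀ t ∈ LB, t ∈ SG := by
      intro t ht
      rcases List.mem_append.mp ht with h | h
      · exact hlA t h
      rcases List.mem_append.mp h with h | h
      · exact hsub (hlH t h)
      · exact hlB t h
    set L : ℕ := LB.length with hLdef
    have hLlen : L = DH A + (M + DH B) := by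
      rw [hLdef, hLB]
      simp [List.length_append, hlAlen', hlBlen', hlHlen]
    set p : ℕ → G := fun j => A * (LB.take j).prod with hp
    have hp0 : p 0 = A := by simp [hp]
    have hpL : p L = B := by
      have hq : (LB.take L).prod = A⁻¹ * B := by
        rw [hLdef, List.take_length, hLB]
        rw [List.prod_append, List.prod_append, hlAprod, hlHprod, hlBprod]
        group
      rw [hp]
      simp only [hq]
      group
    have hstepb : ∀ j, j < L → wordLen SG ((p j)⁻¹ * p (j+1)) ≤ 1 := by
      intro j hj
      have := wordLen_path_le LB hLBmem A (show j ≤ j + 1 by omega)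
      rw [show j + 1 - j = 1 by omega] at this
      exact this
    -- vertices of the connecting path stay ≥ D from x
    have hvert : ∀ j, j ≤ L → D ≤ wordLen SG ((p j)⁻¹ * x) := by
      intro j hj
      rcases le_or_gt j lA.length with hc1 | hc1
      · -- initial geodesic segment
        have dAp : wordLen SG (A⁻¹ * p j) ≤ j := by
          have := wordLen_path_le LB hLBmem A (Nat.zero_le j)
          simpa [hp] using this
        have tri : wordLen SG (A⁻¹ * x) ≤
            wordLen SG (A⁻¹ * p j) + wordLen SG ((p j)⁻¹ * x) := by
          have := htri (A⁻¹ * p j) ((p j)⁻¹ * x)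
          rwa [show (A⁻¹ * p j) * ((p j)⁻¹ * x) = A⁻¹ * x by group] at this
        rw [dax] at tri
        omega
      rcases le_or_gt j (lA.length + lH.length) with hc2 | hc2
      · -- middle segment: vertices in H
        have hpj : p j ∈ H := by
          have htake : LB.take j = lA ++ lH.take (j - lA.length) := by
            rw [hLB, List.take_append,
              List.take_of_length_le (le_of_lt hc1),
              List.take_append_of_le_length (by omega)]
          have hprod : (LB.take j).prod = (A⁻¹ * ha) * (lH.take (j - lA.length)).prod := by
            rw [htake, List.prod_append, hlAprod]
          have : p j = ha * (lH.take (j - lA.length)).prod := by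
            rw [hp]
            simp only [hprod]
            group
          rw [this]
          refine H.mul_mem haH (H.list_prod_mem ?_)
          intro t ht
          exact hSHinH (hlH t (List.mem_of_mem_take ht))
        have := hDH_le x (p j) hpj
        rw [hflip x (p j)] at this
        omega
      · -- final geodesic segment
        have dpB : wordLen SG ((p j)⁻¹ * B) ≤ DH B := by
          have := wordLen_path_le LB hLBmem A hj
          rw [show (p j)⁻¹ * B = (p j)⁻¹ * p L by rw [hpL]]
          have hlen : L - j ≤ DH B := by omega
          calc wordLen SG ((p j)⁻¹ * p L) ≤ L - j := by
                have h2 := wordLen_path_le LB hLBmem A hj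
                exact h2
            _ ≤ DH B := hlen
        have tri : wordLen SG (x⁻¹ * B) ≤
            wordLen SG (x⁻¹ * p j) + wordLen SG ((p j)⁻¹ * B) := by
          have := htri (x⁻¹ * p j) ((p j)⁻¹ * B)
          rwa [show (x⁻¹ * p j) * ((p j)⁻¹ * B) = x⁻¹ * B by group] at this
        rw [dxb] at tri
        rw [hflip (p j) x]
        omega
    have hL1 : 1 ≤ L := by
      by_contra hL0
      have hLz : L = 0 := by omega
      have hAB : A = B := by
        have h1 := hpL
        rw [hp, hLz] at h1
        simpa using h1
      have : e - s = 0 := by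
        rw [← dab, hAB]
        simp [wordLen_one]
      omega
    -- Gromov products along the path
    have hstepG : ∀ j, j < L → (D:ℝ) - 1/2 ≤ wordGromovProd SG x (p j) (p (j+1)) := by
      intro j hj
      have v1 := hvert j (le_of_lt hj)
      have v2 := hvert (j+1) hj
      have st := hstepb j hj
      unfold wordGromovProd wordDist
      rw [le_div_iff₀ (by norm_num : (0:ℝ) < 2)]
      have c1 : (D:ℝ) ≤ (wordLen SG ((p j)⁻¹ * x) : ℝ) := by exact_mod_cast v1
      have c2 : (D:ℝ) ≤ (wordLen SG ((p (j+1))⁻¹ * x) : ℝ) := by exact_mod_cast v2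
      have c3 : (wordLen SG ((p j)⁻¹ * p (j+1)) : ℝ) ≤ 1 := by exact_mod_cast st
      linarith
    have hPAB : wordGromovProd SG x A B = 0 := by
      unfold wordGromovProd wordDist
      rw [dax, hflip B x, dxb, dab, Nat.cast_sub hsle, Nat.cast_sub hie,
        Nat.cast_sub (le_trans hsle hie)]
      ring
    set K : ℕ := Nat.clog 2 L with hK
    have hLK : L ≤ 2 ^ K := Nat.le_pow_clog one_lt_two L
    have hbis := bisection hδ hhyp hsymm x ((D:ℝ) - 1/2) K L p hL1 hLK hstepG
    rw [hp0, hpL, hPAB] at hbis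
    have hDK : (D:ℝ) - 1/2 ≤ (δ+1) * K := by
      have hc : (0:ℝ) ≤ (K:ℝ) := Nat.cast_nonneg K
      nlinarith
    have hDr : (1:ℝ) ≤ (D:ℝ) := by exact_mod_cast hD1
    have hK1 : 1 ≤ K := by
      by_contra hcon2
      have hKz : K = 0 := by omega
      rw [hKz] at hDK
      simp at hDK
      linarith
    have hL2 : 2 ≤ L := by
      by_contra hcon2
      have hLe : L = 1 := by omega
      rw [hLe, Nat.clog_one_right] at hK
      omega
    have hKL : 2 ^ (K - 1) < L :=
      Nat.pow_pred_clog_lt_self one_lt_two (show 1 < L by omega)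
    refine ⟨D, hND, ?_⟩
    have step1 : (2:ℝ) ^ (2*ε*(D:ℝ) - ε - 1) ≤ (2:ℝ) ^ ((K:ℝ) - 1) := by
      apply (Real.rpow_le_rpow_left_iff (show (1:ℝ) < 2 by norm_num)).mpr
      have hε2 : ε * (δ + 1) = 1/2 := by
        rw [hε]
        field_simp
      have hid : 2*ε*(D:ℝ) - ε = ((D:ℝ) - 1/2) / (δ+1) := by
        rw [eq_div_iff (ne_of_gt hδ1)]
        linear_combination (2*(D:ℝ) - 1) * hε2
      have h2 : ((D:ℝ) - 1/2)/(δ+1) ≤ (K:ℝ) := (div_le_iff₀ hδ1).mpr (by linarith)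
      linarith [hid]
    have step2 : (2:ℝ) ^ ((K:ℝ) - 1) ≤ (L:ℝ) := by
      have hcast : ((K:ℝ) - 1) = ((K - 1 : ℕ):ℝ) := by
        rw [Nat.cast_sub hK1]
        norm_num
      rw [hcast, Real.rpow_natCast]
      exact_mod_cast le_of_lt hKL
    have step3 : (L:ℝ) ≤ 2*(D:ℝ) + disto SG SH H (6*D) * (6*(D:ℝ)) := by
      have hLr : (L:ℝ) = (DH A : ℝ) + ((M:ℝ) + (DH B : ℝ)) := by exact_mod_cast hLlen
      have hMr : (M:ℝ) ≤ disto SG SH H (6*D) * (6*(D:ℝ)) := by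
        have : ((6*D : ℕ):ℝ) = 6*(D:ℝ) := by push_cast; ring
        rwa [this] at hM
      have cA : (DH A : ℝ) ≤ (D:ℝ) := by exact_mod_cast hlaD
      have cB : (DH B : ℝ) ≤ (D:ℝ) := by exact_mod_cast hlbD
      linarith
    linarith
  -- analytic endgame
  set c : ℝ := (2:ℝ) ^ (ε/6) with hc
  have hc1 : 1 < c := by
    rw [hc, Real.one_lt_rpow_iff_of_pos (by norm_num : (0:ℝ) < 2)]
    exact Or.inl ⟨by norm_num, by positivity⟩
  have hev1 : ∀ᶠ R : ℕ in atTop, disto SG SH H R / c ^ R < 1 :=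
    (hsubexp c hc1).eventually_lt_const one_pos
  have h6 : Tendsto (fun D : ℕ => 6 * D) atTop atTop :=
    Filter.tendsto_atTop_atTop.mpr (fun b => ⟨b, fun a ha => by omega⟩)
  have hev1' : ∀ᶠ D : ℕ in atTop, disto SG SH H (6*D) / c ^ (6*D) < 1 := h6.eventually hev1
  have hcpow : ∀ D : ℕ, c ^ (6*D) = (2:ℝ) ^ (ε * D) := by
    intro D
    rw [hc, ← Real.rpow_natCast ((2:ℝ)^(ε/6)) (6*D), ← Real.rpow_mul (by norm_num)]
    congr 1
    push_cast
    ring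
  have hloga : (0:ℝ) < ε * Real.log 2 := by
    have := Real.log_pos (by norm_num : (1:ℝ) < 2)
    positivity
  set a : ℝ := ε * Real.log 2 with ha
  have hev2 : ∀ᶠ D : ℕ in atTop, 32*(D:ℝ) < (2:ℝ) ^ (ε * D) := by
    have t0 := Real.tendsto_pow_mul_exp_neg_atTop_nhds_zero 1
    have t1 : Tendsto (fun D : ℕ => a * (D:ℝ)) atTop atTop :=
      Tendsto.const_mul_atTop hloga tendsto_natCast_atTop_atTop
    have t2 := (t0.comp t1).eventually_lt_const (show (0:ℝ) < a/32 by positivity)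
    filter_upwards [t2] with D hD
    simp only [Function.comp, pow_one] at hD
    have hexp : (2:ℝ) ^ (ε * D) = Real.exp (a * D) := by
      rw [Real.rpow_def_of_pos (by norm_num : (0:ℝ) < 2)]
      congr 1
      rw [ha]; ring
    rw [hexp]
    have hepos : 0 < Real.exp (-(a * D)) := Real.exp_pos _
    have hmul : Real.exp (-(a*D)) * Real.exp (a*D) = 1 := by
      rw [← Real.exp_add]; simp
    have h1 : a * (D:ℝ) < a/32 * Real.exp (a*(D:ℝ)) := by
      have hmm := mul_lt_mul_of_pos_right hD (Real.exp_pos (a*(D:ℝ)))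
      calc a * (D:ℝ) = a * (D:ℝ) * (Real.exp (-(a*(D:ℝ))) * Real.exp (a*(D:ℝ))) := by
            rw [hmul]; ring
        _ = a * (D:ℝ) * Real.exp (-(a*(D:ℝ))) * Real.exp (a*(D:ℝ)) := by ring
        _ < a/32 * Real.exp (a*(D:ℝ)) := hmm
    have h2 : a * (32*(D:ℝ)) < a * Real.exp (a*(D:ℝ)) := by linarith
    exact lt_of_mul_lt_mul_left h2 hloga.le
  have hfreq : ∃ᶠ D : ℕ in atTop,
      (2:ℝ) ^ (2*ε*(D:ℝ) - ε - 1) ≤ 2*(D:ℝ) + disto SG SH H (6*D) * (6*(D:ℝ)) := by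
    rw [Filter.frequently_atTop]
    intro N
    obtain ⟨D, h1, h2⟩ := key N
    exact ⟨D, le_of_lt h1, h2⟩
  obtain ⟨D, hIneq, hd1, hd2⟩ := (hfreq.and_eventually (hev1'.and hev2)).exists
  set X : ℝ := (2:ℝ) ^ (ε * D) with hX
  have hXpos : 0 < X := Real.rpow_pos_of_pos (by norm_num) _
  have hX1 : 1 ≤ X := Real.one_le_rpow (by norm_num) (by positivity)
  have hdisto : disto SG SH H (6*D) < X := by
    have := hd1
    rw [hcpow] at this
    exact (div_lt_one (hX ▸ hXpos)).mp this
  have hsplit : (2:ℝ) ^ (2*ε*(D:ℝ) - ε - 1) = X * X * (2:ℝ) ^ (-ε - 1) := by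
    rw [hX, ← Real.rpow_add (by norm_num), ← Real.rpow_add (by norm_num)]
    congr 1
    ring
  have h4 : (1:ℝ)/4 ≤ (2:ℝ) ^ (-ε - 1) := by
    have : (2:ℝ) ^ ((-2 : ℝ)) ≤ (2:ℝ) ^ (-ε - 1) :=
      (Real.rpow_le_rpow_left_iff (by norm_num : (1:ℝ) < 2)).mpr (by linarith)
    have h2 : (2:ℝ) ^ ((-2:ℝ)) = 1/4 := by
      rw [show (-2:ℝ) = ((-2:ℤ):ℝ) by norm_num, Real.rpow_intCast]
      norm_num
    linarith [h2 ▸ this]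
  have hDnn : (0:ℝ) ≤ (D:ℝ) := Nat.cast_nonneg D
  have hchain : X * X * (1/4) ≤ 8*(D:ℝ)*X := by
    have e1 : X * X * (1/4) ≤ X * X * ((2:ℝ) ^ (-ε - 1)) :=
      mul_le_mul_of_nonneg_left h4 (by positivity)
    have e2 : 2*(D:ℝ) + disto SG SH H (6*D) * (6*(D:ℝ)) ≤ 8*(D:ℝ)*X := by
      nlinarith [hdisto, hX1, hDnn]
    rw [hsplit] at hIneq
    linarith
  have : X ≤ 32 * (D:ℝ) := by nlinarith [hXpos]
  linarith [hd2]
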